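/- arXiv:1512.03257 — 4 statements merged into one kernel-verified Lean document; each statement's English description precedes it below -/
import Mathlib

section
/- Weak duality: for any $\rho(\mathbf{s}|a) \in \mathcal{V}(P)$ and any multipliers $\lambda(s,a,b)$ satisfying $F_\lambda(\mathbf{s}) = \sum_a \rho(a)e^{\sum_b\lambda(s_b,a,b)} \le 1$ for all $\mathbf{s}$, one has $\sum_{s,a,b}P(s|a,b)\rho(a)\lambda(s,a,b) \le I(A;\mathbf{S})$, where $I(A;\mathbf{S})$ is the mutual information of the joint distribution $\rho(\mathbf{s}|a)\rho(a)$. -/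
/-!
Fix an output `σ` and let `R = ∑ a, ρ(σ|a) p(a) = ρ(σ)`. From `t + 1 ≤ eᵗ` at
`t = L - log (x / R)` we get `x L ≤ x log (x / R) + R eᴸ - x`. Take `x = ρ(σ|a)` and
`L = ∑ b, λ(σ b, a, b)`, weight by `p(a)` and sum over `a`: the error term is
`R (F_λ(σ) - 1) ≤ 0`. Summing over `σ`, the marginal constraints turn the left side into the dual
objective.
-/

open Finset Real

theorem sum_filter_eq_mul_eq_sum_mul_comp {X S : Type*} [Fintype X] [Fintype S] [DecidableEq S]
    (g : X → S) (w : X → ℝ) (f : S → ℝ) :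
    ∑ s, (∑ x ∈ univ.filter (fun x => g x = s), w x) * f s = ∑ x, w x * f (g x) := by
  rw [← sum_fiberwise univ g]
  refine sum_congr rfl fun s _ => ?_
  rw [sum_mul]
  refine sum_congr rfl fun x hx => ?_
  rw [(mem_filter.mp hx).2]

theorem mul_le_mul_log_div_add_mul_exp_sub {x R : ℝ} (L : ℝ) (hx : 0 ≤ x) (hR : 0 < R) :
    x * L ≤ x * log (x / R) + R * exp L - x := by
  rcases hx.eq_or_lt with rfl | hx
  · simp only [zero_mul, zero_add, sub_zero]
    positivity
  have hexp : exp (L - log (x / R)) = R * exp L / x := by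
    rw [exp_sub, exp_log (by positivity)]
    field_simp
  have key := mul_le_mul_of_nonneg_left (add_one_le_exp (L - log (x / R))) hx.le
  rw [hexp, mul_div_cancel₀ _ hx.ne'] at key
  linarith

theorem sum_mul_le_sum_mul_log_div_of_sum_mul_exp_le_one {A : Type*} [Fintype A]
    (q x L : A → ℝ) (hq : ∀ a, 0 ≤ q a) (hx : ∀ a, 0 ≤ x a)
    (hexp : ∑ a, q a * exp (L a) ≤ 1) :
    ∑ a, x a * q a * L a ≤ ∑ a, x a * q a * log (x a / ∑ a', x a' * q a') := by
  set R := ∑ a', x a' * q a' with hRdef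
  have hw : ∀ a, 0 ≤ x a * q a := fun a => mul_nonneg (hx a) (hq a)
  rcases (sum_nonneg fun a _ => hw a : 0 ≤ R).eq_or_lt with hR | hR
  · have hw0 : ∀ a, x a * q a = 0 := fun a =>
      (sum_eq_zero_iff_of_nonneg fun a _ => hw a).mp hR.symm a (mem_univ a)
    simp only [hw0, zero_mul, le_refl]
  calc ∑ a, x a * q a * L a
      ≤ ∑ a, q a * (x a * log (x a / R) + R * exp (L a) - x a) :=
        sum_le_sum fun a _ => by
          rw [mul_right_comm, mul_comm (x a * L a)]
          exact mul_le_mul_of_nonneg_left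
            (mul_le_mul_log_div_add_mul_exp_sub (L a) (hx a) hR) (hq a)
    _ = ∑ a, (x a * q a * log (x a / R) + R * (q a * exp (L a)) - x a * q a) :=
        sum_congr rfl fun a _ => by ring
    _ = ∑ a, x a * q a * log (x a / R) + R * (∑ a, q a * exp (L a) - 1) := by
        rw [sum_sub_distrib, sum_add_distrib, ← mul_sum, ← hRdef]
        ring
    _ ≤ ∑ a, x a * q a * log (x a / R) := by
        linarith [mul_nonpos_of_nonneg_of_nonpos hR.le (sub_nonpos.mpr hexp)]

theorem stmt_12_general {S A B : Type*} [Fintype S] [Fintype A] [Fintype B]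
    [DecidableEq S] [DecidableEq B]
    (P : S → A → B → ℝ)
    (p : A → ℝ) (hp : ∀ a, 0 ≤ p a)
    (ρ : A → (B → S) → ℝ)
    (hρnn : ∀ a σ, 0 ≤ ρ a σ)
    (hmarg : ∀ a b s,
      ∑ σ ∈ Finset.univ.filter (fun σ : B → S => σ b = s), ρ a σ = P s a b)
    (lam : S → A → B → ℝ)
    (hfeas : ∀ σ : B → S, (∑ a, p a * Real.exp (∑ b, lam (σ b) a b)) ≤ 1) :
    (∑ s, ∑ a, ∑ b, P s a b * p a * lam s a b) ≤
      ∑ σ : B → S, ∑ a, ρ a σ * p a *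
        Real.log (ρ a σ / ∑ a', ρ a' σ * p a') := by
  have hdual : ∑ s, ∑ a, ∑ b, P s a b * p a * lam s a b
      = ∑ σ : B → S, ∑ a, ρ a σ * p a * ∑ b, lam (σ b) a b := by
    calc ∑ s, ∑ a, ∑ b, P s a b * p a * lam s a b
        = ∑ a, ∑ b, ∑ s, P s a b * (p a * lam s a b) := by
          rw [sum_comm]
          exact sum_congr rfl fun a _ => by rw [sum_comm]; simp only [mul_assoc]
      _ = ∑ a, ∑ b, ∑ σ : B → S, ρ a σ * (p a * lam (σ b) a b) := by
          simp only [← hmarg, sum_filter_eq_mul_eq_sum_mul_comp]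
      _ = ∑ σ : B → S, ∑ a, ρ a σ * p a * ∑ b, lam (σ b) a b := by
          simp only [mul_sum, ← mul_assoc]
          rw [sum_comm (γ := B → S)]
          exact sum_congr rfl fun a _ => sum_comm
  rw [hdual]
  exact sum_le_sum fun σ _ => sum_mul_le_sum_mul_log_div_of_sum_mul_exp_le_one
    p (ρ · σ) (fun a => ∑ b, lam (σ b) a b) hp (hρnn · σ) (hfeas σ)

/-- Weak duality: if `ρ ∈ 𝒱(P)` and `F_λ(𝐬) ≤ 1` for all `𝐬`, then
`∑ P(s|a,b)ρ(a)λ(s,a,b) ≤ I(A;𝐒)`. -/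
theorem stmt_12 {S A B : Type*} [Fintype S] [Fintype A] [Fintype B]
    [DecidableEq S] [DecidableEq B]
    (P : S → A → B → ℝ)
    (p : A → ℝ) (hp : ∀ a, 0 ≤ p a) (hp1 : ∑ a, p a = 1)
    (ρ : A → (B → S) → ℝ)
    (hρnn : ∀ a σ, 0 ≤ ρ a σ) (hρn : ∀ a, ∑ σ, ρ a σ = 1)
    (hmarg : ∀ a b s,
      ∑ σ ∈ Finset.univ.filter (fun σ : B → S => σ b = s), ρ a σ = P s a b)
    (lam : S → A → B → ℝ)
    (hfeas : ∀ σ : B → S, (∑ a, p a * Real.exp (∑ b, lam (σ b) a b)) ≤ 1) :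
    (∑ s, ∑ a, ∑ b, P s a b * p a * lam s a b) ≤
      ∑ σ : B → S, ∑ a, ρ a σ * p a *
        Real.log (ρ a σ / ∑ a', ρ a' σ * p a') :=
  stmt_12_general P p hp ρ hρnn hmarg lam hfeas
end

section
/- Optimality conditions: suppose $\rho(\mathbf{s}|a) \in \mathcal{V}(P)$ and multipliers $\lambda(s,a,b)$ satisfy (i) $\rho(\mathbf{s}|a) = \rho(\mathbf{s})e^{\sum_b\lambda(s_b,a,b)}$ with $\rho(\mathbf{s}) = \sum_a\rho(\mathbf{s}|a)\rho(a)$ and (ii) $F_\lambda(\mathbf{s}) \le 1$ for all $\mathbf{s}$. Then the dual value equals the primal value, $\sum_{s,a,b}P(s|a,b)\rho(a)\lambda(s,a,b) = I(A;\mathbf{S})$, and hence $\rho(\mathbf{s}|a)$ minimizes $I(A;\mathbf{S})$ over $\mathcal{V}(P)$. -/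
/-!
Write `Λ(𝐬,a) = ∑_b λ(s_b,a,b)`. For every `τ ∈ 𝒱(P)` the marginal constraints turn the dual value
into `∑_{𝐬,a} τ(𝐬|a) ρ(a) Λ(𝐬,a)`. For `τ = ρ(·|·)`, condition (i) says `log (ρ(𝐬|a)/ρ(𝐬)) = Λ(𝐬,a)`,
so this is the primal value of `ρ`. For any other `τ`, with `τ(𝐬) = ∑_a τ(𝐬|a) ρ(a)`, the inequality
`x - y ≤ x log (x/y)` at `x = τ(𝐬|a)`, `y = τ(𝐬) e^{Λ(𝐬,a)}` summed over `a` gives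
`∑_a τ(𝐬|a) ρ(a) Λ(𝐬,a) ≤ ∑_a τ(𝐬|a) ρ(a) log (τ(𝐬|a)/τ(𝐬)) + τ(𝐬) (F_λ(𝐬) - 1)`,
and condition (ii) makes the last term nonpositive.
-/

open Finset Real

lemma sub_le_mul_log_div {x y : ℝ} (hx : 0 ≤ x) (hy : 0 < y) : x - y ≤ x * log (x / y) := by
  rcases hx.eq_or_lt with rfl | hx
  · simpa using hy.le
  have h := one_sub_inv_le_log_of_pos (div_pos hx hy)
  rw [inv_div] at h
  calc x - y = x * (1 - y / x) := by field_simp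
    _ ≤ x * log (x / y) := mul_le_mul_of_nonneg_left h hx.le

lemma mul_log_div_eq_of_eq_mul_exp {x m L : ℝ} (h : x = m * exp L) : x * log (x / m) = x * L := by
  rcases eq_or_ne x 0 with hx | hx
  · simp [hx]
  have hm : m ≠ 0 := by rintro rfl; simp [h] at hx
  rw [show x / m = exp L by rw [h, mul_div_cancel_left₀ _ hm], log_exp]

lemma mul_mul_le_mul_mul_log_div_add {t p q L : ℝ} (ht : 0 ≤ t) (hp : 0 ≤ p) (htq : t * p ≤ q) :
    t * p * L ≤ t * p * log (t / q) + (q * (p * exp L) - t * p) := by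
  rcases (mul_nonneg ht hp).eq_or_lt with h0 | h0
  · rw [← h0] at htq ⊢
    simp only [zero_mul, zero_add, sub_zero]
    positivity
  have ht' : 0 < t := pos_of_mul_pos_left h0 hp
  have hq : 0 < q := h0.trans_le htq
  have h := sub_le_mul_log_div ht (mul_pos hq (exp_pos L))
  rw [← div_div, log_div (div_pos ht' hq).ne' (exp_ne_zero L), log_exp] at h
  nlinarith [mul_le_mul_of_nonneg_right h hp]

lemma sum_mul_mul_le_sum_mul_mul_log_div_add {A : Type*} [Fintype A] {τ p : A → ℝ}
    (hτ : ∀ a, 0 ≤ τ a) (hp : ∀ a, 0 ≤ p a) (L : A → ℝ) :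
    ∑ a, τ a * p a * L a ≤ ∑ a, τ a * p a * log (τ a / ∑ a', τ a' * p a')
      + (∑ a', τ a' * p a') * (∑ a, p a * exp (L a) - 1) := by
  set q := ∑ a', τ a' * p a'
  have hterm : ∀ a, τ a * p a ≤ q := fun a =>
    single_le_sum (f := fun a' => τ a' * p a') (fun a' _ => mul_nonneg (hτ a') (hp a')) (mem_univ a)
  calc ∑ a, τ a * p a * L a
      ≤ ∑ a, (τ a * p a * log (τ a / q) + (q * (p a * exp (L a)) - τ a * p a)) :=
        sum_le_sum fun a _ => mul_mul_le_mul_mul_log_div_add (hτ a) (hp a) (hterm a)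
    _ = _ := by rw [sum_add_distrib, sum_sub_distrib, ← mul_sum]; ring

lemma sum_mul_mul_le_sum_mul_mul_log_div {Ω A : Type*} [Fintype Ω] [Fintype A] {p : A → ℝ}
    (hp : ∀ a, 0 ≤ p a) {τ : A → Ω → ℝ} (hτ : ∀ a ω, 0 ≤ τ a ω) {L : Ω → A → ℝ}
    (hL : ∀ ω, ∑ a, p a * exp (L ω a) ≤ 1) :
    ∑ ω, ∑ a, τ a ω * p a * L ω a
      ≤ ∑ ω, ∑ a, τ a ω * p a * log (τ a ω / ∑ a', τ a' ω * p a') := by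
  refine sum_le_sum fun ω _ => ?_
  have hq : 0 ≤ ∑ a', τ a' ω * p a' := sum_nonneg fun a _ => mul_nonneg (hτ a ω) (hp a)
  have := sum_mul_mul_le_sum_mul_mul_log_div_add (fun a => hτ a ω) hp (L ω)
  nlinarith [mul_nonpos_of_nonneg_of_nonpos hq (sub_nonpos.mpr (hL ω))]

section Coupling

variable {S A B : Type*} [Fintype S] [Fintype A] [Fintype B] [DecidableEq S] [DecidableEq B]

lemma sum_marginal_mul (τ : (B → S) → ℝ) (b : B) (g : S → ℝ) :
    ∑ s, (∑ σ ∈ univ.filter (fun σ : B → S => σ b = s), τ σ) * g s = ∑ σ, τ σ * g (σ b) := by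
  rw [← sum_fiberwise univ (fun σ : B → S => σ b)]
  refine sum_congr rfl fun s _ => ?_
  rw [sum_mul]
  exact sum_congr rfl fun σ hσ => by rw [(mem_filter.mp hσ).2]

lemma sum_mul_mul_eq_of_marginal (P : S → A → B → ℝ) (p : A → ℝ) (lam : S → A → B → ℝ)
    {τ : A → (B → S) → ℝ}
    (hτ : ∀ a b s, ∑ σ ∈ univ.filter (fun σ : B → S => σ b = s), τ a σ = P s a b) :
    ∑ s, ∑ a, ∑ b, P s a b * p a * lam s a b
      = ∑ σ : B → S, ∑ a, τ a σ * p a * ∑ b, lam (σ b) a b := by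
  calc ∑ s, ∑ a, ∑ b, P s a b * p a * lam s a b
      = ∑ a, ∑ b, ∑ s, P s a b * (p a * lam s a b) := by
        rw [sum_comm]
        exact sum_congr rfl fun a _ => by rw [sum_comm]; simp only [mul_assoc]
    _ = ∑ a, ∑ b, ∑ σ : B → S, τ a σ * (p a * lam (σ b) a b) := by
        refine sum_congr rfl fun a _ => sum_congr rfl fun b _ => ?_
        simp only [← hτ a b]
        exact sum_marginal_mul (τ a) b (fun s => p a * lam s a b)
    _ = ∑ a, ∑ σ : B → S, ∑ b, τ a σ * (p a * lam (σ b) a b) :=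
        sum_congr rfl fun a _ => sum_comm
    _ = ∑ σ : B → S, ∑ a, τ a σ * p a * ∑ b, lam (σ b) a b := by
        rw [sum_comm]
        simp only [mul_sum, mul_assoc]

end Coupling

theorem stmt_13_general {S A B : Type*} [Fintype S] [Fintype A] [Fintype B]
    [DecidableEq S] [DecidableEq B]
    (P : S → A → B → ℝ)
    (p : A → ℝ) (hp : ∀ a, 0 < p a)
    (V : Set (A → (B → S) → ℝ))
    (hV : V = {τ | (∀ a σ, 0 ≤ τ a σ) ∧ (∀ a, ∑ σ, τ a σ = 1) ∧
      ∀ a b s, ∑ σ ∈ Finset.univ.filter (fun σ : B → S => σ b = s), τ a σ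
        = P s a b})
    (ρ : A → (B → S) → ℝ) (hρV : ρ ∈ V)
    (m : (B → S) → ℝ)
    (lam : S → A → B → ℝ)
    (hform : ∀ a σ, ρ a σ = m σ * Real.exp (∑ b, lam (σ b) a b))
    (hfeas : ∀ σ : B → S, (∑ a, p a * Real.exp (∑ b, lam (σ b) a b)) ≤ 1) :
    (∑ s, ∑ a, ∑ b, P s a b * p a * lam s a b) =
      (∑ σ : B → S, ∑ a, ρ a σ * p a * Real.log (ρ a σ / m σ)) ∧
    ∀ τ ∈ V,
      (∑ σ : B → S, ∑ a, ρ a σ * p a * Real.log (ρ a σ / m σ)) ≤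
        ∑ σ : B → S, ∑ a, τ a σ * p a *
          Real.log (τ a σ / ∑ a', τ a' σ * p a') := by
  subst hV
  obtain ⟨-, -, hρP⟩ := hρV
  have hprimal : ∑ σ : B → S, ∑ a, ρ a σ * p a * log (ρ a σ / m σ)
      = ∑ σ : B → S, ∑ a, ρ a σ * p a * ∑ b, lam (σ b) a b :=
    sum_congr rfl fun σ _ => sum_congr rfl fun a _ => by
      rw [mul_right_comm, mul_log_div_eq_of_eq_mul_exp (hform a σ), mul_right_comm]
  refine ⟨(sum_mul_mul_eq_of_marginal P p lam hρP).trans hprimal.symm, fun τ hτ => ?_⟩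
  obtain ⟨hτ0, -, hτP⟩ := hτ
  rw [hprimal, ← sum_mul_mul_eq_of_marginal P p lam hρP, sum_mul_mul_eq_of_marginal P p lam hτP]
  exact sum_mul_mul_le_sum_mul_mul_log_div (fun a => (hp a).le) hτ0 hfeas

/-- Optimality conditions: if `ρ ∈ 𝒱(P)`, `ρ(𝐬|a) = ρ(𝐬) e^{∑_b λ(s_b,a,b)}`
with `ρ(𝐬)` the marginal, and `F_λ(𝐬) ≤ 1`, then the dual value equals the
primal value `I(A;𝐒)` and `ρ` minimizes `I(A;𝐒)` over `𝒱(P)`. -/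
theorem stmt_13 {S A B : Type*} [Fintype S] [Fintype A] [Fintype B]
    [DecidableEq S] [DecidableEq B]
    (P : S → A → B → ℝ)
    (p : A → ℝ) (hp : ∀ a, 0 < p a) (hp1 : ∑ a, p a = 1)
    (V : Set (A → (B → S) → ℝ))
    (hV : V = {τ | (∀ a σ, 0 ≤ τ a σ) ∧ (∀ a, ∑ σ, τ a σ = 1) ∧
      ∀ a b s, ∑ σ ∈ Finset.univ.filter (fun σ : B → S => σ b = s), τ a σ
        = P s a b})
    (ρ : A → (B → S) → ℝ) (hρV : ρ ∈ V)
    (m : (B → S) → ℝ) (hm : ∀ σ, m σ = ∑ a, ρ a σ * p a)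
    (lam : S → A → B → ℝ)
    (hform : ∀ a σ, ρ a σ = m σ * Real.exp (∑ b, lam (σ b) a b))
    (hfeas : ∀ σ : B → S, (∑ a, p a * Real.exp (∑ b, lam (σ b) a b)) ≤ 1) :
    (∑ s, ∑ a, ∑ b, P s a b * p a * lam s a b) =
      (∑ σ : B → S, ∑ a, ρ a σ * p a * Real.log (ρ a σ / m σ)) ∧
    ∀ τ ∈ V,
      (∑ σ : B → S, ∑ a, ρ a σ * p a * Real.log (ρ a σ / m σ)) ≤
        ∑ σ : B → S, ∑ a, τ a σ * p a *
          Real.log (τ a σ / ∑ a', τ a' σ * p a') :=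
  stmt_13_general P p hp V hV ρ hρV m lam hform hfeas
end

section
/- If $\rho(\mathbf{s}|a) = \rho(\mathbf{s})F_\lambda(\mathbf{s})^{-1}e^{\sum_b\lambda(s_b,a,b)}$ and $\sum_{\mathbf{s}:s_b=s}\rho(\mathbf{s}|a)=P(s|a,b)$, then the mutual information satisfies $I(A;\mathbf{S}) \le \mathcal{C}_+ := \sum_{s,a,b}P(s|a,b)\rho(a)\lambda(s,a,b) - \sum_{\mathbf{s}}\rho(\mathbf{s})\log F_\lambda(\mathbf{s})$, with equality when $\rho(\mathbf{s}) = \sum_a \rho(\mathbf{s}|a)\rho(a)$. -/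
open Finset Real

/-!
The tilted form of `ρ(𝐬|a)` forces its `ρ(a)`-average to be `R(𝐬)`, since the normaliser is
exactly `F(𝐬)`. Hence `log (ρ(𝐬|a) / R(𝐬)) = ∑_b λ(s_b,a,b) - log F(𝐬)` wherever the weight is
nonzero, and averaging the `λ`-term over `𝐬` only sees the single-site marginals `P(s|a,b)`.
So `I(A;𝐒) = 𝒞₊` identically, which gives both the bound and the equality.
-/

lemma sum_mul_log_div_marginal_of_eq_tilted {A : Type*} [Fintype A] (p t ρ : A → ℝ) (r : ℝ)
    (hρ : ∀ a, ρ a = r * (∑ a', p a' * exp (t a'))⁻¹ * exp (t a)) :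
    ∑ a, ρ a * p a * log (ρ a / ∑ a', ρ a' * p a') =
      ∑ a, ρ a * p a * t a - r * log (∑ a', p a' * exp (t a')) := by
  set f := ∑ a', p a' * exp (t a')
  by_cases hc : r * f⁻¹ = 0
  · have hρ0 : ∀ a, ρ a = 0 := fun a => by rw [hρ, hc, zero_mul]
    have hr : r * log f = 0 := by
      rcases mul_eq_zero.1 hc with h | h
      · rw [h, zero_mul]
      · rw [inv_eq_zero.1 h, log_zero, mul_zero]
    simp [hρ0, hr]
  · have hf : f ≠ 0 := fun h => hc (by rw [h, inv_zero, mul_zero])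
    have hr : r ≠ 0 := fun h => hc (by rw [h, zero_mul])
    have hmarg : ∑ a', ρ a' * p a' = r := by
      calc ∑ a', ρ a' * p a' = r * f⁻¹ * f := by
            rw [mul_sum]; exact sum_congr rfl fun a _ => by rw [hρ]; ring
        _ = r := by rw [mul_assoc, inv_mul_cancel₀ hf, mul_one]
    have hlog : ∀ a, log (ρ a / r) = t a - log f := fun a => by
      have hratio : ρ a / r = exp (t a) / f := by rw [hρ]; field_simp
      rw [hratio, log_div (exp_ne_zero _) hf, log_exp]
    calc ∑ a, ρ a * p a * log (ρ a / ∑ a', ρ a' * p a')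
        = ∑ a, (ρ a * p a * t a - ρ a * p a * log f) := by
          refine sum_congr rfl fun a _ => ?_
          rw [hmarg, hlog]; ring
      _ = ∑ a, ρ a * p a * t a - r * log f := by rw [sum_sub_distrib, ← sum_mul, hmarg]

lemma sum_mul_sum_apply_eq_sum_marginal {ι S : Type*} [Fintype ι] [DecidableEq ι] [Fintype S]
    [DecidableEq S] (w : (ι → S) → ℝ) (h : S → ι → ℝ) :
    ∑ σ, w σ * ∑ i, h (σ i) i =
      ∑ s, ∑ i, (∑ σ ∈ univ.filter (fun σ : ι → S => σ i = s), w σ) * h s i := by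
  calc ∑ σ, w σ * ∑ i, h (σ i) i
      = ∑ i, ∑ s, ∑ σ ∈ univ.filter (fun σ : ι → S => σ i = s), w σ * h (σ i) i := by
        simp_rw [mul_sum]
        rw [sum_comm]
        exact sum_congr rfl fun i _ => (sum_fiberwise _ _ _).symm
    _ = ∑ s, ∑ i, (∑ σ ∈ univ.filter (fun σ : ι → S => σ i = s), w σ) * h s i := by
        rw [sum_comm]
        refine sum_congr rfl fun s _ => sum_congr rfl fun i _ => ?_
        rw [sum_mul]
        exact sum_congr rfl fun σ hσ => by rw [(mem_filter.1 hσ).2]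

theorem stmt_14_general {S A B : Type*} [Fintype S] [Fintype A] [Fintype B]
    [DecidableEq S] [DecidableEq B]
    (P : S → A → B → ℝ)
    (p : A → ℝ)
    (R : (B → S) → ℝ)
    (lam : S → A → B → ℝ)
    (F : (B → S) → ℝ)
    (hF : ∀ σ, F σ = ∑ a, p a * Real.exp (∑ b, lam (σ b) a b))
    (ρ : A → (B → S) → ℝ)
    (hform : ∀ a σ, ρ a σ = R σ * (F σ)⁻¹ * Real.exp (∑ b, lam (σ b) a b))
    (hmarg : ∀ a b s,
      ∑ σ ∈ Finset.univ.filter (fun σ : B → S => σ b = s), ρ a σ = P s a b)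
    (Cplus : ℝ)
    (hCplus : Cplus = (∑ s, ∑ a, ∑ b, P s a b * p a * lam s a b) -
      ∑ σ : B → S, R σ * Real.log (F σ)) :
    (∑ σ : B → S, ∑ a, ρ a σ * p a *
        Real.log (ρ a σ / ∑ a', ρ a' σ * p a')) ≤ Cplus ∧
    ((∀ σ, R σ = ∑ a, ρ a σ * p a) →
      (∑ σ : B → S, ∑ a, ρ a σ * p a *
        Real.log (ρ a σ / ∑ a', ρ a' σ * p a')) = Cplus) := by
  have hlam : ∑ σ : B → S, ∑ a, ρ a σ * p a * ∑ b, lam (σ b) a b =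
      ∑ s, ∑ a, ∑ b, P s a b * p a * lam s a b := by
    calc ∑ σ : B → S, ∑ a, ρ a σ * p a * ∑ b, lam (σ b) a b
        = ∑ a, p a * ∑ σ : B → S, ρ a σ * ∑ b, lam (σ b) a b := by
          rw [sum_comm]
          exact sum_congr rfl fun a _ => by rw [mul_sum]; exact sum_congr rfl fun σ _ => by ring
      _ = ∑ a, p a * ∑ s, ∑ b, P s a b * lam s a b := by
          refine sum_congr rfl fun a _ => ?_
          simp only [sum_mul_sum_apply_eq_sum_marginal (ρ a) (lam · a ·), hmarg]
      _ = ∑ s, ∑ a, ∑ b, P s a b * p a * lam s a b := by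
          simp only [mul_sum]
          rw [sum_comm]
          exact sum_congr rfl fun s _ => sum_congr rfl fun a _ => sum_congr rfl fun b _ => by ring
  have key : (∑ σ : B → S, ∑ a, ρ a σ * p a *
      Real.log (ρ a σ / ∑ a', ρ a' σ * p a')) = Cplus := by
    rw [hCplus, ← hlam, ← sum_sub_distrib]
    refine sum_congr rfl fun σ _ => ?_
    rw [hF σ]
    exact sum_mul_log_div_marginal_of_eq_tilted p _ (ρ · σ) (R σ) fun a => by rw [hform, hF]
  exact ⟨key.le, fun _ => key⟩

/-- Upper bound: if `ρ(𝐬|a) = R(𝐬) F_λ(𝐬)⁻¹ e^{∑_b λ(s_b,a,b)}` satisfies the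
marginal constraints, then `I(A;𝐒) ≤ 𝒞₊ = ∑ P(s|a,b)ρ(a)λ(s,a,b)
- ∑_𝐬 R(𝐬) log F_λ(𝐬)`, with equality when `R` is the marginal of the joint. -/
theorem stmt_14 {S A B : Type*} [Fintype S] [Fintype A] [Fintype B]
    [DecidableEq S] [DecidableEq B]
    (P : S → A → B → ℝ)
    (p : A → ℝ) (hp : ∀ a, 0 < p a) (hp1 : ∑ a, p a = 1)
    (R : (B → S) → ℝ) (hRnn : ∀ σ, 0 ≤ R σ) (hR1 : ∑ σ, R σ = 1)
    (lam : S → A → B → ℝ)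
    (F : (B → S) → ℝ)
    (hF : ∀ σ, F σ = ∑ a, p a * Real.exp (∑ b, lam (σ b) a b))
    (ρ : A → (B → S) → ℝ)
    (hform : ∀ a σ, ρ a σ = R σ * (F σ)⁻¹ * Real.exp (∑ b, lam (σ b) a b))
    (hmarg : ∀ a b s,
      ∑ σ ∈ Finset.univ.filter (fun σ : B → S => σ b = s), ρ a σ = P s a b)
    (Cplus : ℝ)
    (hCplus : Cplus = (∑ s, ∑ a, ∑ b, P s a b * p a * lam s a b) -
      ∑ σ : B → S, R σ * Real.log (F σ)) :
    (∑ σ : B → S, ∑ a, ρ a σ * p a *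
        Real.log (ρ a σ / ∑ a', ρ a' σ * p a')) ≤ Cplus ∧
    ((∀ σ, R σ = ∑ a, ρ a σ * p a) →
      (∑ σ : B → S, ∑ a, ρ a σ * p a *
        Real.log (ρ a σ / ∑ a', ρ a' σ * p a')) = Cplus) :=
  stmt_14_general P p R lam F hF ρ hform hmarg Cplus hCplus
end

section
/- Convergence of Algorithm 2: let $R_0(\mathbf{s}) > 0$ be a positive initial probability distribution, and inductively let $\rho_n(\mathbf{s}|a) \in \mathcal{V}(P)$ minimize $\mathcal{K}[\rho, R_{n-1}] = \sum_{\mathbf{s},a}\rho(\mathbf{s}|a)\rho(a)\log\frac{\rho(\mathbf{s}|a)}{R_{n-1}(\mathbf{s})}$ over $\mathcal{V}(P)$, and set $R_n(\mathbf{s}) = \sum_a\rho_n(\mathbf{s}|a)\rho(a)$. Then the sequence $\mathcal{K}_n = \sum_{\mathbf{s},a}\rho_n(\mathbf{s}|a)\rho(a)\log\frac{\rho_n(\mathbf{s}|a)}{R_n(\mathbf{s})}$ is nonincreasing and converges to $\mathcal{J}(P) = \min_{\rho\in\mathcal{V}(P)} I(A;\mathbf{S})$. -/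
/-!
Encoding a channel `ρ` together with the input law `p` as the joint law `ρ·p` on `X × A`, the
functional `𝒦[ρ, R]` is the relative entropy `D(ρ·p ‖ R ⊗ p)`, and the chain rule gives
`𝒦[ρ, R] = I(ρ) + D(q_ρ ‖ R)` with `q_ρ` the output law. As `Rₙ₊₁ = q_{ρₙ₊₁}`, this yields
`Kₙ₊₁ = I(ρₙ₊₂) ≤ 𝒦[ρₙ₊₂, Rₙ₊₁] ≤ 𝒦[ρₙ₊₁, Rₙ₊₁] = Kₙ`. For the limit, first-order optimality of
`ρₙ₊₁` on the convex set `V` and the data-processing inequality for the output law give, for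
every `τ ∈ V`, the five-point property `Kₙ + D(q_τ ‖ Rₙ₊₁) ≤ I(τ) + D(q_τ ‖ Rₙ)`; telescoping,
`Kₙ ≤ I(τ) + D(q_τ ‖ R₀) / (n + 1)`. The delicate point is supports: since `u log u` has slope
`-∞` at `0`, each minimizer charges every point charged by some channel of `V`, and so `Rₙ`
never vanishes there.
-/

open Finset Filter Real Topology

lemma sub_le_mul_log_div_s17 {a b : ℝ} (ha : 0 ≤ a) (hb : 0 < b) : a - b ≤ a * log (a / b) := by
  calc a - b = b * (a / b - 1) := by field_simp
    _ ≤ b * (a / b * log (a / b)) := by gcongr; exact self_sub_one_le_mul_log (by positivity)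
    _ = a * log (a / b) := by field_simp

section RelEntropy

variable {ι : Type*} [Fintype ι]

noncomputable def relEntropy (x r : ι → ℝ) : ℝ :=
  ∑ i, x i * log (x i / r i)

lemma sum_mul_log_sum_div_le_relEntropy {f g : ι → ℝ} (hf : 0 ≤ f) (hg : 0 ≤ g)
    (hfg : ∀ i, 0 < f i → 0 < g i) :
    (∑ i, f i) * log ((∑ i, f i) / ∑ i, g i) ≤ relEntropy f g := by
  obtain hF | hF := (sum_nonneg fun i _ => hf i).eq_or_lt
  · have hf0 : ∀ i, f i = 0 := fun i => (sum_eq_zero_iff_of_nonneg fun i _ => hf i).1 hF.symm i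
      (mem_univ i)
    simp [relEntropy, hf0]
  obtain ⟨j, -, hj⟩ := exists_lt_of_sum_lt (f := fun _ => (0 : ℝ)) (by simpa using hF)
  have hG : 0 < ∑ i, g i := (hfg j hj).trans_le (single_le_sum (fun i _ => hg i) (mem_univ j))
  set c := (∑ i, f i) / ∑ i, g i
  have hc : 0 < c := div_pos hF hG
  have hterm : ∀ i, f i * log c + (f i - g i * c) ≤ f i * log (f i / g i) := by
    intro i
    obtain hfi | hfi := (show 0 ≤ f i from hf i).eq_or_lt
    · simp only [← hfi, zero_mul, zero_add, zero_sub, neg_nonpos, zero_div, log_zero]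
      exact mul_nonneg (hg i) hc.le
    · have hgi := hfg i hfi
      have := sub_le_mul_log_div_s17 (hf i) (mul_pos hgi hc)
      rw [div_mul_eq_div_div, log_div (div_pos hfi hgi).ne' hc.ne'] at this
      linarith
  have hsum := sum_le_sum fun i (_ : i ∈ univ) => hterm i
  rw [sum_add_distrib, sum_sub_distrib, ← sum_mul, ← sum_mul, mul_div_cancel₀ _ hG.ne'] at hsum
  simpa [relEntropy] using hsum

lemma relEntropy_nonneg {f g : ι → ℝ} (hf : 0 ≤ f) (hg : 0 ≤ g) (hfg : ∀ i, 0 < f i → 0 < g i)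
    (hsum : ∑ i, f i = ∑ i, g i) : 0 ≤ relEntropy f g := by
  have := sum_mul_log_sum_div_le_relEntropy hf hg hfg
  rw [hsum] at this
  obtain h | h := eq_or_ne (∑ i, g i) 0 <;> simp_all

lemma mul_log_div_sub_mul_log_div_le {x u r : ℝ} (hx : 0 < x) (hu : 0 < u) (hr : r ≠ 0) :
    u * log (u / r) - x * log (x / r) ≤ (u - x) * (log (x / r) + 1) + (u - x) ^ 2 / x := by
  have hsplit : log (u / r) = log (u / x) + log (x / r) := by
    rw [log_div hu.ne' hr, log_div hu.ne' hx.ne', log_div hx.ne' hr]; ring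
  calc u * log (u / r) - x * log (x / r) = u * log (u / x) + (u - x) * log (x / r) := by
        rw [hsplit]; ring
    _ ≤ u * (u / x - 1) + (u - x) * log (x / r) := by
        gcongr; exact log_le_sub_one_of_pos (div_pos hu hx)
    _ = (u - x) * (log (x / r) + 1) + (u - x) ^ 2 / x := by field_simp; ring

lemma segment_mul_log_div_sub_le {x y r t : ℝ} (hx : 0 ≤ x) (hy : 0 ≤ y)
    (hr : 0 < x ∨ 0 < y → r ≠ 0) (ht : t ∈ Set.Ioo 0 1) :
    ((1 - t) * x + t * y) * log (((1 - t) * x + t * y) / r) - x * log (x / r) ≤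
      t * (if 0 < x then (y - x) * (log (x / r) + 1) else y * log (y / r)) +
      t ^ 2 * (if 0 < x then (y - x) ^ 2 / x else 0) + t * log t * (if 0 < x then 0 else y) := by
  obtain ⟨ht0, ht1⟩ := ht
  split_ifs with hx0
  · have hu : 0 < (1 - t) * x + t * y := by nlinarith
    have := mul_log_div_sub_mul_log_div_le hx0 hu (hr (Or.inl hx0))
    have hux : (1 - t) * x + t * y - x = t * (y - x) := by ring
    rw [hux] at this
    exact this.trans_eq (by ring)
  · obtain rfl : x = 0 := le_antisymm (not_lt.1 hx0) hx
    obtain hy0 | hy0 := hy.eq_or_lt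
    · simp [← hy0]
    · rw [show (1 - t) * 0 + t * y = t * y by ring, mul_div_assoc,
        log_mul ht0.ne' (div_ne_zero hy0.ne' (hr (Or.inr hy0)))]
      exact le_of_eq (by ring)

lemma eq_zero_and_nonneg_of_forall_nonneg_add_mul_log {L C Γ : ℝ} (hΓ : 0 ≤ Γ)
    (h : ∀ t ∈ Set.Ioo (0 : ℝ) 1, 0 ≤ L + t * C + Γ * log t) : Γ = 0 ∧ 0 ≤ L := by
  have hev : ∀ᶠ t in 𝓝[>] (0 : ℝ), 0 ≤ L + t * C + Γ * log t :=
    Filter.mem_of_superset (Ioo_mem_nhdsGT one_pos) h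
  have hlin : Tendsto (fun t => L + t * C) (𝓝[>] (0 : ℝ)) (𝓝 L) := by
    have : Tendsto (fun t : ℝ => L + t * C) (𝓝 0) (𝓝 (L + 0 * C)) :=
      (continuous_const.add (continuous_id.mul continuous_const)).tendsto 0
    simpa using this.mono_left nhdsWithin_le_nhds
  obtain rfl | hΓ := hΓ.eq_or_lt
  · exact ⟨rfl, ge_of_tendsto hlin (by simpa using hev)⟩
  · have hbot := hlin.add_atBot (tendsto_log_nhdsGT_zero.const_mul_atBot hΓ)
    obtain ⟨t, ht, ht'⟩ := (hev.and (hbot.eventually (eventually_lt_atBot 0))).exists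
    linarith

theorem IsMinOn.relEntropy_optimality {C : Set (ι → ℝ)} {x y r : ι → ℝ}
    (hmin : IsMinOn (relEntropy · r) C x) (hC : Convex ℝ C) (hxC : x ∈ C) (hyC : y ∈ C)
    (hx : 0 ≤ x) (hy : 0 ≤ y) (hr : ∀ i, 0 < x i ∨ 0 < y i → r i ≠ 0) :
    (∀ i, 0 < y i → 0 < x i) ∧ 0 ≤ ∑ i, (y i - x i) * (log (x i / r i) + 1) := by
  set ℓ : ι → ℝ := fun i => if 0 < x i then (y i - x i) * (log (x i / r i) + 1)
    else y i * log (y i / r i)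
  set c : ι → ℝ := fun i => if 0 < x i then (y i - x i) ^ 2 / x i else 0
  set γ : ι → ℝ := fun i => if 0 < x i then 0 else y i
  have hγ : ∀ i, 0 ≤ γ i := fun i => by
    simp only [γ]; split_ifs
    exacts [le_rfl, hy i]
  have hslope : ∀ t ∈ Set.Ioo (0 : ℝ) 1, 0 ≤ ∑ i, ℓ i + t * ∑ i, c i + (∑ i, γ i) * log t := by
    intro t ht
    have hle : relEntropy x r ≤ relEntropy ((1 - t) • x + t • y) r :=
      hmin (hC hxC hyC (by linarith [ht.2]) ht.1.le (by ring))
    have hexp := sum_le_sum fun i (_ : i ∈ univ) =>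
      segment_mul_log_div_sub_le (hx i) (hy i) (hr i) ht
    simp only [relEntropy, Pi.add_apply, Pi.smul_apply, smul_eq_mul] at hle
    simp only [sum_sub_distrib, sum_add_distrib, ← mul_sum] at hexp
    have : 0 ≤ t * (∑ i, ℓ i + t * ∑ i, c i + (∑ i, γ i) * log t) := by
      simp only [ℓ, c, γ]; linarith
    exact nonneg_of_mul_nonneg_right (by linarith) ht.1
  obtain ⟨hΓ, hL⟩ := eq_zero_and_nonneg_of_forall_nonneg_add_mul_log
    (sum_nonneg fun i _ => hγ i) hslope
  have hsupp : ∀ i, 0 < y i → 0 < x i := by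
    intro i hyi
    by_contra hxi
    have := (sum_eq_zero_iff_of_nonneg fun i _ => hγ i).1 hΓ i (mem_univ i)
    simp only [γ, if_neg hxi] at this
    exact hyi.ne' this
  refine ⟨hsupp, hL.trans_eq (sum_congr rfl fun i _ => ?_)⟩
  by_cases hxi : 0 < x i
  · simp [ℓ, hxi]
  · have hyi : y i = 0 := le_antisymm (not_lt.1 (mt (hsupp i) hxi)) (hy i)
    have hxi : x i = 0 := le_antisymm (not_lt.1 hxi) (hx i)
    simp [ℓ, hxi, hyi]

/-- The three-point property of Csiszár and Tusnády. -/
theorem IsMinOn.relEntropy_add_relEntropy_le {C : Set (ι → ℝ)} {x y r : ι → ℝ}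
    (hmin : IsMinOn (relEntropy · r) C x) (hC : Convex ℝ C) (hxC : x ∈ C) (hyC : y ∈ C)
    (hx : 0 ≤ x) (hy : 0 ≤ y) (hr : ∀ i, 0 < x i ∨ 0 < y i → r i ≠ 0)
    (hsum : ∑ i, x i = ∑ i, y i) :
    relEntropy x r + relEntropy y x ≤ relEntropy y r := by
  obtain ⟨hsupp, hL⟩ := hmin.relEntropy_optimality hC hxC hyC hx hy hr
  have hterm : ∀ i, (y i - x i) * (log (x i / r i) + 1) =
      y i * log (y i / r i) - y i * log (y i / x i) - x i * log (x i / r i) + (y i - x i) := by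
    intro i
    obtain hyi | hyi := (show 0 ≤ y i from hy i).eq_or_lt
    · simp [← hyi]; ring
    · have hxi := hsupp i hyi
      have hri := hr i (Or.inl hxi)
      rw [log_div hyi.ne' hri, log_div hyi.ne' hxi.ne', log_div hxi.ne' hri]
      ring
  simp only [hterm, sum_add_distrib, sum_sub_distrib, hsum, sub_self, add_zero] at hL
  simp only [relEntropy]
  linarith

end RelEntropy

section Marginal

variable {α β : Type*} [Fintype β]

def marginal (z : α × β → ℝ) (a : α) : ℝ :=
  ∑ b, z (a, b)

lemma le_marginal {z : α × β → ℝ} (hz : 0 ≤ z) (i : α × β) : z i ≤ marginal z i.1 :=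
  single_le_sum (f := fun b => z (i.1, b)) (fun _ _ => hz _) (mem_univ i.2)

variable [Fintype α]

lemma marginal_mem_stdSimplex {z : α × β → ℝ} (hz : z ∈ stdSimplex ℝ (α × β)) :
    marginal z ∈ stdSimplex ℝ α :=
  ⟨fun a => sum_nonneg fun b _ => hz.1 _, by rw [← hz.2, Fintype.sum_prod_type]; rfl⟩

lemma relEntropy_marginal_le {z w : α × β → ℝ} (hz : 0 ≤ z) (hw : 0 ≤ w)
    (hzw : ∀ i, 0 < z i → 0 < w i) : relEntropy (marginal z) (marginal w) ≤ relEntropy z w := by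
  rw [relEntropy, relEntropy, Fintype.sum_prod_type]
  exact sum_le_sum fun a _ => sum_mul_log_sum_div_le_relEntropy (fun b => hz (a, b))
    (fun b => hw (a, b)) (fun b => hzw (a, b))

lemma relEntropy_prod_eq_add {z : α × β → ℝ} {r : α → ℝ} {p : β → ℝ} (hz : 0 ≤ z)
    (hr : ∀ i, 0 < z i → r i.1 ≠ 0) (hp : ∀ i, 0 < z i → p i.2 ≠ 0) :
    relEntropy z (fun i => r i.1 * p i.2) =
      relEntropy z (fun i => marginal z i.1 * p i.2) + relEntropy (marginal z) r := by
  have hmarg : relEntropy (marginal z) r = ∑ i, z i * log (marginal z i.1 / r i.1) := by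
    rw [relEntropy, Fintype.sum_prod_type]
    exact sum_congr rfl fun a _ => sum_mul _ _ _
  rw [hmarg, relEntropy, relEntropy, ← sum_add_distrib]
  refine sum_congr rfl fun i _ => ?_
  obtain hzi | hzi := (show 0 ≤ z i from hz i).eq_or_lt
  · simp [← hzi]
  · have hm : marginal z i.1 ≠ 0 := (hzi.trans_le (le_marginal hz i)).ne'
    have hri := hr i hzi
    have hpi := hp i hzi
    rw [log_div hzi.ne' (mul_ne_zero hri hpi), log_div hzi.ne' (mul_ne_zero hm hpi),
      log_div hm hri, log_mul hri hpi, log_mul hm hpi]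
    ring

end Marginal

section Channel

variable {X A : Type*}

def joint (p : A → ℝ) (τ : A → X → ℝ) : X × A → ℝ := fun i => τ i.2 i.1 * p i.2

lemma isLinearMap_joint (p : A → ℝ) : IsLinearMap ℝ (joint (X := X) p) :=
  ⟨fun _ _ => funext fun _ => add_mul _ _ _, fun _ _ => funext fun _ => mul_assoc _ _ _⟩

variable [Fintype X]

lemma pos_of_joint_pos {p : A → ℝ} {τ : A → X → ℝ} (hτ : ∀ a, τ a ∈ stdSimplex ℝ X)
    {i : X × A} (hi : 0 < joint p τ i) : 0 < p i.2 :=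
  pos_of_mul_pos_right hi ((hτ i.2).1 i.1)

variable [Fintype A]

/-- The paper's `𝒦[τ, R] = ∑ₐ p(a) D(τ(·|a) ‖ R)`, as a relative entropy on `X × A`. -/
noncomputable def condRelEntropy (p : A → ℝ) (τ : A → X → ℝ) (R : X → ℝ) : ℝ :=
  relEntropy (joint p τ) (fun i => R i.1 * p i.2)

noncomputable def mutualInfo (p : A → ℝ) (τ : A → X → ℝ) : ℝ :=
  condRelEntropy p τ (marginal (joint p τ))

lemma condRelEntropy_eq_sum (p : A → ℝ) (τ : A → X → ℝ) (R : X → ℝ) :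
    condRelEntropy p τ R = ∑ σ, ∑ a, τ a σ * p a * log (τ a σ / R σ) := by
  rw [condRelEntropy, relEntropy, Fintype.sum_prod_type]
  refine sum_congr rfl fun σ _ => sum_congr rfl fun a _ => ?_
  obtain hpa | hpa := eq_or_ne (p a) 0
  · simp [joint, hpa]
  · simp only [joint, mul_div_mul_right _ _ hpa]

lemma joint_mem_stdSimplex {p : A → ℝ} {τ : A → X → ℝ} (hp : p ∈ stdSimplex ℝ A)
    (hτ : ∀ a, τ a ∈ stdSimplex ℝ X) : joint p τ ∈ stdSimplex ℝ (X × A) := by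
  refine ⟨fun i => mul_nonneg ((hτ i.2).1 i.1) (hp.1 i.2), ?_⟩
  change ∑ i : X × A, τ i.2 i.1 * p i.2 = 1
  rw [Fintype.sum_prod_type_right]
  simp only [← sum_mul, (hτ _).2, one_mul, hp.2]

variable {p : A → ℝ} {τ : A → X → ℝ}

lemma condRelEntropy_eq_mutualInfo_add (hp : p ∈ stdSimplex ℝ A) (hτ : ∀ a, τ a ∈ stdSimplex ℝ X)
    {R : X → ℝ} (hR : ∀ i, 0 < joint p τ i → R i.1 ≠ 0) :
    condRelEntropy p τ R = mutualInfo p τ + relEntropy (marginal (joint p τ)) R :=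
  relEntropy_prod_eq_add (joint_mem_stdSimplex hp hτ).1 hR
    fun _ hi => (pos_of_joint_pos hτ hi).ne'

lemma relEntropy_marginal_joint_nonneg (hp : p ∈ stdSimplex ℝ A)
    (hτ : ∀ a, τ a ∈ stdSimplex ℝ X) {R : X → ℝ} (hR : R ∈ stdSimplex ℝ X)
    (hRpos : ∀ i, 0 < joint p τ i → 0 < R i.1) :
    0 ≤ relEntropy (marginal (joint p τ)) R := by
  have hm := marginal_mem_stdSimplex (joint_mem_stdSimplex hp hτ)
  refine relEntropy_nonneg hm.1 hR.1 (fun σ hσ => ?_) (hm.2.trans hR.2.symm)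
  obtain ⟨a, -, ha⟩ := exists_lt_of_sum_lt (s := univ) (f := fun _ => (0 : ℝ))
    (g := fun a => joint p τ (σ, a)) (by rw [sum_const_zero]; exact hσ)
  exact hRpos (σ, a) ha

lemma mutualInfo_nonneg (hp : p ∈ stdSimplex ℝ A) (hτ : ∀ a, τ a ∈ stdSimplex ℝ X) :
    0 ≤ mutualInfo p τ := by
  have hj := joint_mem_stdSimplex hp hτ
  have hm := marginal_mem_stdSimplex hj
  refine relEntropy_nonneg hj.1 (fun i => mul_nonneg (hm.1 i.1) (hp.1 i.2))
    (fun i hi => mul_pos (hi.trans_le (le_marginal hj.1 i)) (pos_of_joint_pos hτ hi)) ?_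
  rw [hj.2, Fintype.sum_prod_type]
  simp only [← mul_sum, hp.2, mul_one, hm.2]

lemma mutualInfo_le_condRelEntropy (hp : p ∈ stdSimplex ℝ A) (hτ : ∀ a, τ a ∈ stdSimplex ℝ X)
    {R : X → ℝ} (hR : R ∈ stdSimplex ℝ X) (hRpos : ∀ i, 0 < joint p τ i → 0 < R i.1) :
    mutualInfo p τ ≤ condRelEntropy p τ R := by
  rw [condRelEntropy_eq_mutualInfo_add hp hτ fun i hi => (hRpos i hi).ne']
  linarith [relEntropy_marginal_joint_nonneg hp hτ hR hRpos]

end Channel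

lemma Antitone.le_add_div_of_sub_le_sub_succ {a d : ℕ → ℝ} {c : ℝ} (ha : Antitone a)
    (hd : ∀ n, 0 ≤ d n) (h : ∀ n, a n - c ≤ d n - d (n + 1)) (n : ℕ) :
    a n ≤ c + d 0 / (n + 1) := by
  rw [← sub_le_iff_le_add', le_div_iff₀ (by positivity)]
  calc (a n - c) * (n + 1) = ∑ _k ∈ range (n + 1), (a n - c) := by
        rw [sum_const, card_range, nsmul_eq_mul, mul_comm]; push_cast; ring
    _ ≤ ∑ k ∈ range (n + 1), (a k - c) :=
        sum_le_sum fun k hk => by linarith [ha (mem_range_succ_iff.1 hk)]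
    _ ≤ ∑ k ∈ range (n + 1), (d k - d (k + 1)) := sum_le_sum fun k _ => h k
    _ = d 0 - d (n + 1) := sum_range_sub' d (n + 1)
    _ ≤ d 0 := by linarith [hd (n + 1)]

section AlternatingMinimization

variable {X A : Type*} [Fintype X] [Fintype A]

/-- The iterates of Algorithm 2 of the paper. -/
structure IsAlternatingMinimization (p : A → ℝ) (V : Set (A → X → ℝ)) (R : ℕ → X → ℝ)
    (ρ : ℕ → A → X → ℝ) : Prop where
  p_mem : p ∈ stdSimplex ℝ A
  convex : Convex ℝ V
  mem_stdSimplex : ∀ τ ∈ V, ∀ a, τ a ∈ stdSimplex ℝ X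
  R_zero_pos : ∀ σ, 0 < R 0 σ
  sum_R_zero : ∑ σ, R 0 σ = 1
  mem : ∀ n, ρ (n + 1) ∈ V
  isMinOn : ∀ n, IsMinOn (condRelEntropy p · (R n)) V (ρ (n + 1))
  R_succ : ∀ n, R (n + 1) = marginal (joint p (ρ (n + 1)))

namespace IsAlternatingMinimization

variable {p : A → ℝ} {V : Set (A → X → ℝ)} {R : ℕ → X → ℝ} {ρ : ℕ → A → X → ℝ}

lemma joint_mem (h : IsAlternatingMinimization p V R ρ) {τ : A → X → ℝ} (hτ : τ ∈ V) :
    joint p τ ∈ stdSimplex ℝ (X × A) :=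
  joint_mem_stdSimplex h.p_mem (h.mem_stdSimplex τ hτ)

lemma R_mem_stdSimplex (h : IsAlternatingMinimization p V R ρ) :
    ∀ n, R n ∈ stdSimplex ℝ X
  | 0 => ⟨fun σ => (h.R_zero_pos σ).le, h.sum_R_zero⟩
  | n + 1 => h.R_succ n ▸ marginal_mem_stdSimplex (h.joint_mem (h.mem n))

lemma condRelEntropy_succ_eq_mutualInfo (h : IsAlternatingMinimization p V R ρ) (n : ℕ) :
    condRelEntropy p (ρ (n + 1)) (R (n + 1)) = mutualInfo p (ρ (n + 1)) := by
  rw [mutualInfo, h.R_succ]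

lemma isMinOn_joint (h : IsAlternatingMinimization p V R ρ) (n : ℕ) :
    IsMinOn (relEntropy · (fun i => R n i.1 * p i.2)) (joint p '' V) (joint p (ρ (n + 1))) := by
  rintro _ ⟨τ, hτ, rfl⟩
  exact h.isMinOn n hτ

lemma convex_image_joint (h : IsAlternatingMinimization p V R ρ) : Convex ℝ (joint p '' V) :=
  h.convex.is_linear_image (isLinearMap_joint p)

lemma R_mul_ne_zero (h : IsAlternatingMinimization p V R ρ) {n : ℕ}
    (hn : ∀ τ ∈ V, ∀ i, 0 < joint p τ i → 0 < R n i.1) {τ : A → X → ℝ} (hτ : τ ∈ V)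
    (i : X × A) (hi : 0 < joint p (ρ (n + 1)) i ∨ 0 < joint p τ i) : R n i.1 * p i.2 ≠ 0 := by
  have hpos : ∀ υ ∈ V, 0 < joint p υ i → R n i.1 * p i.2 ≠ 0 := fun υ hυ hυi =>
    (mul_pos (hn υ hυ i hυi) (pos_of_joint_pos (h.mem_stdSimplex υ hυ) hυi)).ne'
  exact hi.elim (hpos _ (h.mem n)) (hpos τ hτ)

lemma joint_succ_pos_of_R_pos (h : IsAlternatingMinimization p V R ρ) {n : ℕ}
    (hn : ∀ τ ∈ V, ∀ i, 0 < joint p τ i → 0 < R n i.1) {τ : A → X → ℝ} (hτ : τ ∈ V) {i : X × A}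
    (hi : 0 < joint p τ i) : 0 < joint p (ρ (n + 1)) i :=
  ((h.isMinOn_joint n).relEntropy_optimality h.convex_image_joint
    (Set.mem_image_of_mem _ (h.mem n)) (Set.mem_image_of_mem _ hτ) (h.joint_mem (h.mem n)).1
    (h.joint_mem hτ).1 (h.R_mul_ne_zero hn hτ)).1 i hi

lemma R_pos (h : IsAlternatingMinimization p V R ρ) :
    ∀ n, ∀ τ ∈ V, ∀ i, 0 < joint p τ i → 0 < R n i.1
  | 0 => fun _ _ i _ => h.R_zero_pos i.1
  | n + 1 => fun τ hτ i hi => by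
      rw [h.R_succ]
      exact (h.joint_succ_pos_of_R_pos (h.R_pos n) hτ hi).trans_le
        (le_marginal (h.joint_mem (h.mem n)).1 i)

lemma joint_succ_pos (h : IsAlternatingMinimization p V R ρ) (n : ℕ) {τ : A → X → ℝ}
    (hτ : τ ∈ V) {i : X × A} (hi : 0 < joint p τ i) : 0 < joint p (ρ (n + 1)) i :=
  h.joint_succ_pos_of_R_pos (h.R_pos n) hτ hi

lemma mutualInfo_le_condRelEntropy (h : IsAlternatingMinimization p V R ρ) {τ : A → X → ℝ}
    (hτ : τ ∈ V) (n : ℕ) : mutualInfo p τ ≤ condRelEntropy p τ (R n) :=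
  _root_.mutualInfo_le_condRelEntropy h.p_mem (h.mem_stdSimplex τ hτ) (h.R_mem_stdSimplex n)
    (h.R_pos n τ hτ)

lemma antitone (h : IsAlternatingMinimization p V R ρ) :
    Antitone fun n => condRelEntropy p (ρ (n + 1)) (R (n + 1)) := by
  refine antitone_nat_of_succ_le fun n => ?_
  calc condRelEntropy p (ρ (n + 2)) (R (n + 2)) = mutualInfo p (ρ (n + 2)) :=
        h.condRelEntropy_succ_eq_mutualInfo (n + 1)
    _ ≤ condRelEntropy p (ρ (n + 2)) (R (n + 1)) := h.mutualInfo_le_condRelEntropy (h.mem _) _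
    _ ≤ condRelEntropy p (ρ (n + 1)) (R (n + 1)) := h.isMinOn (n + 1) (h.mem n)

/-- The five-point property of Csiszár and Tusnády. -/
lemma condRelEntropy_add_relEntropy_le (h : IsAlternatingMinimization p V R ρ) (n : ℕ)
    {τ : A → X → ℝ} (hτ : τ ∈ V) :
    condRelEntropy p (ρ (n + 1)) (R (n + 1)) + relEntropy (marginal (joint p τ)) (R (n + 1)) ≤
      mutualInfo p τ + relEntropy (marginal (joint p τ)) (R n) := by
  have hρ := h.mem n
  have hthree := (h.isMinOn_joint n).relEntropy_add_relEntropy_le h.convex_image_joint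
    (Set.mem_image_of_mem _ hρ) (Set.mem_image_of_mem _ hτ) (h.joint_mem hρ).1
    (h.joint_mem hτ).1 (h.R_mul_ne_zero (h.R_pos n) hτ)
    ((h.joint_mem hρ).2.trans (h.joint_mem hτ).2.symm)
  have hdata : relEntropy (marginal (joint p τ)) (R (n + 1)) ≤
      relEntropy (joint p τ) (joint p (ρ (n + 1))) := by
    rw [h.R_succ]
    exact relEntropy_marginal_le (h.joint_mem hτ).1 (h.joint_mem hρ).1
      fun i => h.joint_succ_pos n hτ
  have hchain := condRelEntropy_eq_mutualInfo_add h.p_mem (h.mem_stdSimplex τ hτ)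
    fun i hi => (h.R_pos n τ hτ i hi).ne'
  have hI := h.condRelEntropy_succ_eq_mutualInfo n
  have hIK := h.mutualInfo_le_condRelEntropy hρ n
  simp only [condRelEntropy] at hchain hI hIK ⊢
  linarith

theorem tendsto (h : IsAlternatingMinimization p V R ρ) :
    Tendsto (fun n => condRelEntropy p (ρ (n + 1)) (R (n + 1))) atTop
      (𝓝 (sInf (mutualInfo p '' V))) := by
  have hbdd : BddBelow (mutualInfo p '' V) := by
    refine ⟨0, ?_⟩
    rintro _ ⟨τ, hτ, rfl⟩
    exact mutualInfo_nonneg h.p_mem (h.mem_stdSimplex τ hτ)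
  have hlow : ∀ n, sInf (mutualInfo p '' V) ≤ condRelEntropy p (ρ (n + 1)) (R (n + 1)) :=
    fun n => h.condRelEntropy_succ_eq_mutualInfo n ▸ csInf_le hbdd ⟨_, h.mem n, rfl⟩
  have hlim := tendsto_atTop_ciInf h.antitone ⟨_, Set.forall_mem_range.2 hlow⟩
  convert hlim using 2
  refine le_antisymm (le_ciInf hlow) (le_csInf ⟨_, _, h.mem 0, rfl⟩ ?_)
  rintro _ ⟨τ, hτ, rfl⟩
  have hbound := h.antitone.le_add_div_of_sub_le_sub_succ
    (d := fun n => relEntropy (marginal (joint p τ)) (R n)) (c := mutualInfo p τ)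
    (fun n => relEntropy_marginal_joint_nonneg h.p_mem (h.mem_stdSimplex τ hτ)
      (h.R_mem_stdSimplex n) (h.R_pos n τ hτ))
    (fun n => by linarith [h.condRelEntropy_add_relEntropy_le n hτ])
  refine le_of_tendsto_of_tendsto' hlim ?_ hbound
  simpa [div_eq_mul_inv] using tendsto_const_nhds.add
    (tendsto_one_div_add_atTop_nhds_zero_nat.const_mul (relEntropy (marginal (joint p τ)) (R 0)))

end IsAlternatingMinimization

end AlternatingMinimization

lemma convex_setOf_channel_marginals {S A B : Type*} [Fintype S] [Fintype B] [DecidableEq S]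
    [DecidableEq B] (P : S → A → B → ℝ) :
    Convex ℝ {τ : A → (B → S) → ℝ | (∀ a σ, 0 ≤ τ a σ) ∧ (∀ a, ∑ σ, τ a σ = 1) ∧
      ∀ a b s, ∑ σ ∈ univ.filter (fun σ : B → S => σ b = s), τ a σ = P s a b} := by
  rintro τ ⟨hτ₀, hτ₁, hτP⟩ υ ⟨hυ₀, hυ₁, hυP⟩ s t hs ht hst
  refine ⟨fun a σ => ?_, fun a => ?_, fun a b x => ?_⟩
  · simp only [Pi.add_apply, Pi.smul_apply, smul_eq_mul]
    exact add_nonneg (mul_nonneg hs (hτ₀ a σ)) (mul_nonneg ht (hυ₀ a σ))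
  all_goals simp only [Pi.add_apply, Pi.smul_apply, smul_eq_mul, sum_add_distrib, ← mul_sum,
    hτ₁, hυ₁, hτP, hυP, mul_one, ← add_mul, hst, one_mul]

theorem stmt_17_general {S A B : Type*} [Fintype S] [Fintype A] [Fintype B]
    [DecidableEq S] [DecidableEq B]
    (P : S → A → B → ℝ)
    (p : A → ℝ) (hp : ∀ a, 0 ≤ p a) (hp1 : ∑ a, p a = 1)
    (V : Set (A → (B → S) → ℝ))
    (hV : V = {τ | (∀ a σ, 0 ≤ τ a σ) ∧ (∀ a, ∑ σ, τ a σ = 1) ∧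
      ∀ a b s, ∑ σ ∈ Finset.univ.filter (fun σ : B → S => σ b = s), τ a σ
        = P s a b})
    (K : (A → (B → S) → ℝ) → ((B → S) → ℝ) → ℝ)
    (hK : ∀ ρ R, K ρ R =
      ∑ σ : B → S, ∑ a, ρ a σ * p a * Real.log (ρ a σ / R σ))
    (I : (A → (B → S) → ℝ) → ℝ)
    (hI : ∀ ρ, I ρ = ∑ σ : B → S, ∑ a, ρ a σ * p a *
      Real.log (ρ a σ / ∑ a', ρ a' σ * p a'))
    (R : ℕ → (B → S) → ℝ) (ρseq : ℕ → A → (B → S) → ℝ)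
    (hR0pos : ∀ σ, 0 < R 0 σ) (hR01 : ∑ σ, R 0 σ = 1)
    (hρmin : ∀ n, ρseq (n + 1) ∈ V ∧
      ∀ τ ∈ V, K (ρseq (n + 1)) (R n) ≤ K τ (R n))
    (hRupd : ∀ n σ, R (n + 1) σ = ∑ a, ρseq (n + 1) a σ * p a) :
    Antitone (fun n => K (ρseq (n + 1)) (R (n + 1))) ∧
    Tendsto (fun n => K (ρseq (n + 1)) (R (n + 1))) atTop
      (nhds (sInf {x : ℝ | ∃ ρ ∈ V, x = I ρ})) := by
  obtain rfl : K = condRelEntropy p := by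
    funext τ R
    rw [hK, condRelEntropy_eq_sum]
  obtain rfl : I = mutualInfo p := by
    funext τ
    rw [hI, mutualInfo, condRelEntropy_eq_sum]
    rfl
  have h : IsAlternatingMinimization p V R ρseq :=
    { p_mem := ⟨hp, hp1⟩
      convex := hV ▸ convex_setOf_channel_marginals P
      mem_stdSimplex := fun τ hτ a => by
        rw [hV] at hτ
        exact ⟨hτ.1 a, hτ.2.1 a⟩
      R_zero_pos := hR0pos
      sum_R_zero := hR01
      mem := fun n => (hρmin n).1
      isMinOn := fun n => isMinOn_iff.2 (hρmin n).2
      R_succ := fun n => funext (hRupd n) }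
  have himage : {x : ℝ | ∃ ρ ∈ V, x = mutualInfo p ρ} = mutualInfo p '' V := by
    ext
    simp [eq_comm]
  exact ⟨h.antitone, himage ▸ h.tendsto⟩

/-- Convergence of Algorithm 2 (alternating minimization): starting from a
positive distribution `R₀`, alternately minimizing
`K[ρ,R] = ∑ ρ(𝐬|a)ρ(a) log(ρ(𝐬|a)/R(𝐬))` over `ρ ∈ 𝒱(P)` and over `R`
(yielding the marginal) produces a nonincreasing sequence `Kₙ` converging to
`𝒥(P) = min_{ρ ∈ 𝒱(P)} I(A;𝐒)`. -/
theorem stmt_17 {S A B : Type*} [Fintype S] [Fintype A] [Fintype B]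
    [DecidableEq S] [DecidableEq B]
    (P : S → A → B → ℝ)
    (p : A → ℝ) (hp : ∀ a, 0 ≤ p a) (hp1 : ∑ a, p a = 1)
    (V : Set (A → (B → S) → ℝ))
    (hV : V = {τ | (∀ a σ, 0 ≤ τ a σ) ∧ (∀ a, ∑ σ, τ a σ = 1) ∧
      ∀ a b s, ∑ σ ∈ Finset.univ.filter (fun σ : B → S => σ b = s), τ a σ
        = P s a b})
    (hVne : V.Nonempty)
    (K : (A → (B → S) → ℝ) → ((B → S) → ℝ) → ℝ)
    (hK : ∀ ρ R, K ρ R =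
      ∑ σ : B → S, ∑ a, ρ a σ * p a * Real.log (ρ a σ / R σ))
    (I : (A → (B → S) → ℝ) → ℝ)
    (hI : ∀ ρ, I ρ = ∑ σ : B → S, ∑ a, ρ a σ * p a *
      Real.log (ρ a σ / ∑ a', ρ a' σ * p a'))
    (R : ℕ → (B → S) → ℝ) (ρseq : ℕ → A → (B → S) → ℝ)
    (hR0pos : ∀ σ, 0 < R 0 σ) (hR01 : ∑ σ, R 0 σ = 1)
    (hρmin : ∀ n, ρseq (n + 1) ∈ V ∧
      ∀ τ ∈ V, K (ρseq (n + 1)) (R n) ≤ K τ (R n))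
    (hRupd : ∀ n σ, R (n + 1) σ = ∑ a, ρseq (n + 1) a σ * p a) :
    Antitone (fun n => K (ρseq (n + 1)) (R (n + 1))) ∧
    Tendsto (fun n => K (ρseq (n + 1)) (R (n + 1))) atTop
      (nhds (sInf {x : ℝ | ∃ ρ ∈ V, x = I ρ})) :=
  stmt_17_general P p hp hp1 V hV K hK I hI R ρseq hR0pos hR01 hρmin hRupd
end
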